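/- Let A be a set and C an equationally additive clone on A, so that Δ_A = {x ∈ A^4 : x1 = x2 or x3 = x4} is the solution set of a system of equations p_i = q_i with p_i, q_i quaternary operations in C. Then the algebra (A; C) is finitely subdirectly irreducible: for any two congruences α, β of (A; C) other than the equality relation, the intersection α ∩ β is not the equality relation. -/

import Mathlib

/-- A clone on a set `A`: a family of finitary operations containing all
projections and closed under composition. -/
structure Clone (A : Type) where
  ops : ∀ n : ℕ, Set ((Fin n → A) → A)
  proj_mem : ∀ (n : ℕ) (i : Fin n), (fun x => x i) ∈ ops n
  comp_mem : ∀ (m n : ℕ) (f : (Fin n → A) → A) (g : Fin n → (Fin m → A) → A),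
      f ∈ ops n → (∀ i, g i ∈ ops m) → (fun x => f (fun i => g i x)) ∈ ops m

/-- `X ⊆ A^n` is algebraic w.r.t. a family of operations `F`: it is the solution
set of some system of equations between `n`-ary members of `F`. -/
def IsAlgSet {A : Type} (F : ∀ n : ℕ, Set ((Fin n → A) → A)) (n : ℕ)
    (X : Set (Fin n → A)) : Prop :=
  ∃ (I : Type) (p q : I → (Fin n → A) → A),
    (∀ i, p i ∈ F n) ∧ (∀ i, q i ∈ F n) ∧ X = {x | ∀ i, p i x = q i x}

/-- Equational additivity: unions of algebraic sets of the same arity are algebraic. -/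
def EqAdditive {A : Type} (F : ∀ n : ℕ, Set ((Fin n → A) → A)) : Prop :=
  ∀ (n : ℕ) (X Y : Set (Fin n → A)),
    IsAlgSet F n X → IsAlgSet F n Y → IsAlgSet F n (X ∪ Y)

/-- The quaternary relation `Δ_A`. -/
def Delta (A : Type) : Set (Fin 4 → A) := {x | x 0 = x 1 ∨ x 2 = x 3}
/-- Polynomial operations over a clone: generated by the clone, the constants
and the projections, closed under composition. -/
inductive PolyOp {A : Type} (C : Clone A) : ∀ n : ℕ, ((Fin n → A) → A) → Prop
  | base {n : ℕ} {f : (Fin n → A) → A} : f ∈ C.ops n → PolyOp C n f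
  | const {n : ℕ} (a : A) : PolyOp C n (fun _ => a)
  | proj {n : ℕ} (i : Fin n) : PolyOp C n (fun x => x i)
  | comp {m n : ℕ} {f : (Fin n → A) → A} {g : Fin n → (Fin m → A) → A} :
      PolyOp C n f → (∀ i, PolyOp C m (g i)) → PolyOp C m (fun x => f (fun i => g i x))

/-- The clone of polynomial operations of the algebra `(A; C)`. -/
def PolClone {A : Type} (C : Clone A) : Clone A where
  ops n := {f | PolyOp C n f}
  proj_mem n i := PolyOp.proj i
  comp_mem _ _ _ _ hf hg := PolyOp.comp hf hg

/-- A congruence of the algebra `(A; C)`: an equivalence relation compatible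
with all operations of the clone. -/
def IsCong {A : Type} (C : Clone A) (θ : A → A → Prop) : Prop :=
  Equivalence θ ∧ ∀ (n : ℕ) (f : (Fin n → A) → A), f ∈ C.ops n →
    ∀ x y : Fin n → A, (∀ i, θ (x i) (y i)) → θ (f x) (f y)

/-- `d` is a Mal'cev operation. -/
def IsMalcev {A : Type} (d : A → A → A → A) : Prop :=
  ∀ a b : A, d a b b = a ∧ d b b a = a

/-- The algebra `(A; C)` has a Mal'cev polynomial. -/
def HasMalcevPoly {A : Type} (C : Clone A) : Prop :=
  ∃ d : A → A → A → A,
    (fun x : Fin 3 → A => d (x 0) (x 1) (x 2)) ∈ (PolClone C).ops 3 ∧ IsMalcev d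

/-- `α` centralizes `β` modulo `η` (the term condition). -/
def Centralizes {A : Type} (C : Clone A) (α β η : A → A → Prop) : Prop :=
  ∀ (m k : ℕ) (p : (Fin (m + k) → A) → A), p ∈ (PolClone C).ops (m + k) →
    ∀ (a b : Fin m → A) (u v : Fin k → A),
      (∀ i, α (a i) (b i)) → (∀ i, β (u i) (v i)) →
      η (p (Fin.append a u)) (p (Fin.append a v)) →
      η (p (Fin.append b u)) (p (Fin.append b v))

/-- The term condition commutator `[α, β]`: the least congruence `η` such that
`α` centralizes `β` modulo `η` (realized as the intersection of all such). -/
def CommRel {A : Type} (C : Clone A) (α β : A → A → Prop) (x y : A) : Prop :=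
  ∀ η : A → A → Prop, IsCong C η → Centralizes C α β η → η x y

/-- The congruence of `(A; C)` generated by a binary relation `r`. -/
def CongGen {A : Type} (C : Clone A) (r : A → A → Prop) (x y : A) : Prop :=
  ∀ θ : A → A → Prop, IsCong C θ → (∀ a b, r a b → θ a b) → θ x y

/-!
Pick `a ≠ b` with `α a b` and `c ≠ d` with `β c d`, and let `p i = q i` be a system of
`C`-equations defining `Δ_A`. The tuple `(a, b, c, d)` lies outside `Δ_A`, so it violates
some equation `p i = q i`. But it is coordinatewise `α`-related to `(a, a, c, d) ∈ Δ_A` and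
`β`-related to `(a, b, c, c) ∈ Δ_A`, so by compatibility the distinct elements
`p i (a, b, c, d)` and `q i (a, b, c, d)` are related by both `α` and `β`.
-/

theorem exists_rel_ne_of_ne_eq {A : Type} {θ : A → A → Prop} (hθ : ∀ a, θ a a)
    (h : θ ≠ fun a b => a = b) : ∃ a b, θ a b ∧ a ≠ b := by
  by_contra! H
  exact h (funext₂ fun a b => propext ⟨H a b, fun hab => hab ▸ hθ a⟩)

theorem isAlgSet_setOf_eq {A : Type} (C : Clone A) {n : ℕ} (i j : Fin n) :
    IsAlgSet C.ops n {x | x i = x j} :=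
  ⟨Unit, fun _ x => x i, fun _ x => x j, fun _ => C.proj_mem n i, fun _ => C.proj_mem n j,
    by ext; simp⟩

theorem EqAdditive.isAlgSet_delta {A : Type} {C : Clone A} (hC : EqAdditive C.ops) :
    IsAlgSet C.ops 4 (Delta A) :=
  hC 4 _ _ (isAlgSet_setOf_eq C 0 1) (isAlgSet_setOf_eq C 2 3)

theorem IsCong.rel_of_eq {A : Type} {C : Clone A} {θ : A → A → Prop} (hθ : IsCong C θ)
    {n : ℕ} {f g : (Fin n → A) → A} (hf : f ∈ C.ops n) (hg : g ∈ C.ops n)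
    {x y : Fin n → A} (hxy : ∀ j, θ (x j) (y j)) (hy : f y = g y) : θ (f x) (g x) :=
  hθ.1.trans (hy ▸ hθ.2 n f hf x y hxy) (hθ.2 n g hg y x fun j => hθ.1.symm (hxy j))

/-- If `C` is an equationally additive clone on `A`, then the algebra `(A; C)`
is finitely subdirectly irreducible: the intersection of two congruences
distinct from the equality relation is distinct from the equality relation. -/
theorem stmt4 {A : Type} (C : Clone A) (hC : EqAdditive C.ops)
    (α β : A → A → Prop) (hα : IsCong C α) (hβ : IsCong C β)
    (hα0 : α ≠ fun a b => a = b) (hβ0 : β ≠ fun a b => a = b) :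
    (fun a b => α a b ∧ β a b) ≠ fun a b => a = b := by
  obtain ⟨a, b, hab, hab'⟩ := exists_rel_ne_of_ne_eq hα.1.refl hα0
  obtain ⟨c, d, hcd, hcd'⟩ := exists_rel_ne_of_ne_eq hβ.1.refl hβ0
  obtain ⟨I, p, q, hp, hq, hΔ⟩ := hC.isAlgSet_delta
  have hx : ![a, b, c, d] ∉ Delta A := by simp [Delta, hab', hcd']
  obtain ⟨i, hi⟩ : ∃ i, p i ![a, b, c, d] ≠ q i ![a, b, c, d] := by simpa [hΔ] using hx
  have hΔα : ![a, a, c, d] ∈ Delta A := by simp [Delta]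
  have hΔβ : ![a, b, c, c] ∈ Delta A := by simp [Delta]
  rw [hΔ] at hΔα hΔβ
  have hαi : α (p i ![a, b, c, d]) (q i ![a, b, c, d]) :=
    hα.rel_of_eq (hp i) (hq i) (by simp [Fin.forall_fin_succ, hα.1.refl, hα.1.symm hab]) (hΔα i)
  have hβi : β (p i ![a, b, c, d]) (q i ![a, b, c, d]) :=
    hβ.rel_of_eq (hp i) (hq i) (by simp [Fin.forall_fin_succ, hβ.1.refl, hβ.1.symm hcd]) (hΔβ i)
  exact fun h => hi ((congrFun₂ h _ _).mp ⟨hαi, hβi⟩)
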